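/- G₀(Π) is a generator program for Π: (1) for every worldview W of Π there is a stable model M of G₀(Π) with k(W) = k(M) and (M ∩ At(Π)) ∈ W; and (2) every stable model M of G₀(Π) and every set of interpretations W with k(W) = k(M) satisfy (M ∩ At(Π)) ∈ SM(Π^W). -/

import Mathlib

/-! Framework for (epistemic) logic programs:
objective literals, rules, programs, reducts, stable models,
subjective literals, subjective reducts, worldviews, and the
generate-and-test programs T₀, G₀, kp, G₁. -/

/-- Extended objective literals over an atom type `α`:
an atom, a negated atom, a doubly negated atom, or a truth constant. -/
inductive Lit (α : Type) : Type
  | pos (a : α)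
  | neg (a : α)
  | nneg (a : α)
  | top
  | bot

namespace Lit

/-- Satisfaction of an extended objective literal by an interpretation. -/
def sat {α : Type} (I : Set α) : Lit α → Prop
  | .pos a => a ∈ I
  | .neg a => a ∉ I
  | .nneg a => a ∈ I
  | .top => True
  | .bot => False

/-- A literal is negated if it is of the form `¬a` or `¬¬a`. -/
def isNeg {α : Type} : Lit α → Prop
  | .neg _ => True
  | .nneg _ => True
  | _ => False

/-- Rename atoms in a literal. -/
def map {α β : Type} (f : α → β) : Lit α → Lit β
  | .pos a => .pos (f a)
  | .neg a => .neg (f a)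
  | .nneg a => .nneg (f a)
  | .top => .top
  | .bot => .bot

/-- The atoms occurring in a literal. -/
def atoms {α : Type} : Lit α → Set α
  | .pos a => {a}
  | .neg a => {a}
  | .nneg a => {a}
  | _ => ∅

end Lit

/-- An objective rule `a₁ ∨ ... ∨ aₙ ← L₁,...,Lₘ`. -/
structure Rule (α : Type) where
  head : Set α
  body : Set (Lit α)

/-- An objective program: a set of rules. -/
abbrev Program (α : Type) := Set (Rule α)

/-- A rule is satisfied by `I` if `I` satisfies some head atom
whenever it satisfies all body literals. -/
def Rule.sat {α : Type} (I : Set α) (r : Rule α) : Prop :=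
  (∀ L ∈ r.body, L.sat I) → ∃ a ∈ r.head, a ∈ I

/-- A model of a program satisfies all its rules. -/
def isModel {α : Type} (I : Set α) (P : Program α) : Prop := ∀ r ∈ P, r.sat I

/-- The reduct of a program with respect to `I`: drop rules with an unsatisfied
negated body literal; delete negated literals from the remaining rules. -/
def reduct {α : Type} (P : Program α) (I : Set α) : Program α :=
  { r' | ∃ r ∈ P, (∀ L ∈ r.body, L.isNeg → L.sat I) ∧
      r' = ⟨r.head, {L | L ∈ r.body ∧ ¬ L.isNeg}⟩ }

/-- `I` is a stable model of `P` iff it is a ⊆-minimal model of the reduct `P^I`. -/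
def isStable {α : Type} (P : Program α) (I : Set α) : Prop :=
  isModel I (reduct P I) ∧ ∀ J ⊆ I, isModel J (reduct P I) → J = I

/-- The set of stable models of a program. -/
def SM {α : Type} (P : Program α) : Set (Set α) := { I | isStable P I }

/-- A program extended with assumption constraints `⊥ ← ¬a` (for `a ∈ Apos`)
and `⊥ ← a` (for `a ∈ Aneg`). -/
def withAssumption {α : Type} (P : Program α) (Apos Aneg : Set α) : Program α :=
  P ∪ ((fun a => (⟨∅, {Lit.neg a}⟩ : Rule α)) '' Apos)
    ∪ ((fun a => (⟨∅, {Lit.pos a}⟩ : Rule α)) '' Aneg)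

/-- Stable models of `P` under an assumption. -/
def SMA {α : Type} (P : Program α) (Apos Aneg : Set α) : Set (Set α) :=
  SM (withAssumption P Apos Aneg)

/-- Literals of epistemic programs: an objective literal, or a subjective
atom `K l` preceded by zero, one, or two negations. -/
inductive SLit (α : Type) : Type
  | obj (l : Lit α)
  | k (l : Lit α)
  | nk (l : Lit α)
  | nnk (l : Lit α)

/-- An epistemic rule. -/
structure ERule (α : Type) where
  head : Set α
  body : Set (SLit α)

/-- An epistemic program: a set of epistemic rules. -/
abbrev EProgram (α : Type) := Set (ERule α)

/-- `W ⊨ K l`: every interpretation in `W` satisfies `l`. -/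
def satK {α : Type} (W : Set (Set α)) (l : Lit α) : Prop := ∀ I ∈ W, l.sat I

open scoped Classical in
/-- Replace a subjective literal by `⊤`/`⊥` according to `W`; objective
literals are unchanged. -/
noncomputable def SLit.reduce {α : Type} (W : Set (Set α)) : SLit α → Lit α
  | .obj l => l
  | .k l => if satK W l then .top else .bot
  | .nk l => if satK W l then .bot else .top
  | .nnk l => if satK W l then .top else .bot

/-- The subjective reduct `P^W`. -/
noncomputable def subjReduct {α : Type} (P : EProgram α) (W : Set (Set α)) : Program α :=
  (fun r : ERule α => (⟨r.head, (SLit.reduce W) '' r.body⟩ : Rule α)) '' P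

/-- A worldview: a non-empty set of interpretations `W` with `W = SM(P^W)`. -/
def isWorldview {α : Type} (P : EProgram α) (W : Set (Set α)) : Prop :=
  W.Nonempty ∧ W = SM (subjReduct P W)

/-- Normal-form subjective literals: `K a`, `¬K a`, `¬¬K a` with `a` an atom. -/
def SLit.isNormal {α : Type} : SLit α → Prop
  | .obj _ => True
  | .k (.pos _) => True
  | .nk (.pos _) => True
  | .nnk (.pos _) => True
  | _ => False

/-- A program is in normal form if negation does not occur in the scope of `K`. -/
def isNormalForm {α : Type} (P : EProgram α) : Prop :=
  ∀ r ∈ P, ∀ L ∈ r.body, L.isNormal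

/-- The atoms `a` such that a subjective atom `K a` occurs in the program; the
corresponding fresh atoms `ka` are represented as `Sum.inr a`. -/
def KAtoms {α : Type} (P : EProgram α) : Set α :=
  { a | ∃ r ∈ P, SLit.k (Lit.pos a) ∈ r.body ∨ SLit.nk (Lit.pos a) ∈ r.body ∨
        SLit.nnk (Lit.pos a) ∈ r.body }

/-- Replace subjective literals on `K a` by objective literals on the fresh
atom `ka = Sum.inr a`; original atoms become `Sum.inl a`. -/
def SLit.t0 {α : Type} : SLit α → Lit (α ⊕ α)
  | .obj l => l.map Sum.inl
  | .k (.pos a) => .pos (Sum.inr a)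
  | .nk (.pos a) => .neg (Sum.inr a)
  | .nnk (.pos a) => .nneg (Sum.inr a)
  | _ => .bot

/-- The tester program `T₀(P)`: `k(P)` plus a choice rule `{ka}`
(i.e. `ka ← ¬¬ka`) for each `ka ∈ K(P)`. -/
def T0 {α : Type} (P : EProgram α) : Program (α ⊕ α) :=
  ((fun r : ERule α => (⟨Sum.inl '' r.head, SLit.t0 '' r.body⟩ : Rule (α ⊕ α))) '' P)
  ∪ ((fun a => (⟨{Sum.inr a}, {Lit.nneg (Sum.inr a)}⟩ : Rule (α ⊕ α))) '' KAtoms P)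

/-- The generator program `G₀(P)`: `T₀(P)` plus consistency constraints
`⊥ ← ka, ¬a` for each `ka ∈ K(P)`. -/
def G0 {α : Type} (P : EProgram α) : Program (α ⊕ α) :=
  T0 P ∪ ((fun a => (⟨∅, {Lit.pos (Sum.inr a), Lit.neg (Sum.inl a)}⟩ : Rule (α ⊕ α))) '' KAtoms P)

/-- `k(M) = M ∩ K(P)`, read as a set of original atoms. -/
def kOfM {α : Type} (M : Set (α ⊕ α)) : Set α := { a | Sum.inr a ∈ M }

/-- `k(W) = {ka ∈ K(P) : W ⊨ K a}`, read as a set of original atoms. -/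
def kOfW {α : Type} (P : EProgram α) (W : Set (Set α)) : Set α :=
  { a | a ∈ KAtoms P ∧ ∀ I ∈ W, a ∈ I }

/-- Restriction of an interpretation to the original atoms `At(P)`. -/
def restr {α : Type} (M : Set (α ⊕ α)) : Set α := { a | Sum.inl a ∈ M }

/-- The positive part of the assumption determined by a set `S` of K-atoms:
`ka` for each `ka ∈ K(P)` with `a ∈ S`. -/
def asmP {α : Type} (P : EProgram α) (S : Set α) : Set (α ⊕ α) := Sum.inr '' (S ∩ KAtoms P)

/-- The negative part of the assumption determined by a set `S` of K-atoms:
`¬ka` for each `ka ∈ K(P)` with `a ∉ S`. -/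
def asmN {α : Type} (P : EProgram α) (S : Set α) : Set (α ⊕ α) := Sum.inr '' (KAtoms P \ S)

/-- A generator program for `P`. -/
def isGenerator {α : Type} (P : EProgram α) (G : Program (α ⊕ α)) : Prop :=
  (∀ W, isWorldview P W → ∃ M ∈ SM G, kOfM M = kOfW P W ∧ restr M ∈ W) ∧
  (∀ M ∈ SM G, ∀ W : Set (Set α), kOfW P W = kOfM M → restr M ∈ SM (subjReduct P W))

/-- A tester program for `P`: a non-empty `W` is a worldview of `P` iff
`W` equals the restriction to `At(P)` of `SM(T; k(W))`. -/
def isTester {α : Type} (P : EProgram α) (T : Program (α ⊕ α)) : Prop :=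
  ∀ W : Set (Set α), W.Nonempty →
    (isWorldview P W ↔ W = restr '' SMA T (asmP P (kOfW P W)) (asmN P (kOfW P W)))

/-- Atoms of the extended signature for the propagation program: original
atoms and `ka`-atoms (left) plus fresh atoms `kp_a`, `kn_a`, `kn_r` (right). -/
abbrev PExt (α : Type) : Type := (α ⊕ α) ⊕ (α ⊕ (α ⊕ ERule α))

/-- An original atom `a` in the extended signature. -/
def aE {α : Type} (a : α) : PExt α := Sum.inl (Sum.inl a)

/-- The atom `ka` in the extended signature. -/
def kaE {α : Type} (a : α) : PExt α := Sum.inl (Sum.inr a)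

/-- The fresh propagation atom `kp_a`. -/
def kpA {α : Type} (a : α) : PExt α := Sum.inr (Sum.inl a)

/-- The fresh propagation atom `kn_a`. -/
def knA {α : Type} (a : α) : PExt α := Sum.inr (Sum.inr (Sum.inl a))

/-- The fresh propagation atom `kn_r` for a rule `r`. -/
def knR {α : Type} (r : ERule α) : PExt α := Sum.inr (Sum.inr (Sum.inr r))

/-- Translation of a body literal for the rules defining `kp_a`. -/
def SLit.kpBody {α : Type} : SLit α → Lit (PExt α)
  | .obj (.pos a) => .pos (kpA a)
  | .obj (.neg a) => .pos (knA a)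
  | .k (.pos a) => .pos (kaE a)
  | .nk (.pos a) => .neg (kaE a)
  | .nnk (.pos a) => .nneg (kaE a)
  | _ => .bot

/-- Translation of a body literal for the rules defining `kn_r`
(the "complement" of the literal). -/
def SLit.knBody {α : Type} : SLit α → Lit (PExt α)
  | .obj (.pos a) => .pos (knA a)
  | .obj (.neg a) => .pos (kpA a)
  | .k (.pos a) => .neg (kaE a)
  | .nk (.pos a) => .pos (kaE a)
  | .nnk (.pos a) => .neg (kaE a)
  | _ => .top

/-- The atoms occurring in a subjective literal. -/
def SLit.atoms {α : Type} : SLit α → Set α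
  | .obj l => l.atoms
  | .k l => l.atoms
  | .nk l => l.atoms
  | .nnk l => l.atoms

/-- The atoms occurring in an epistemic program. -/
def AtE {α : Type} (P : EProgram α) : Set α :=
  { a | ∃ r ∈ P, a ∈ r.head ∨ ∃ L ∈ r.body, a ∈ L.atoms }

/-- The epistemic-propagation program `kp(P)`:
rules `kp_{a} ← ...` for single-atom-head rules, rules `kn_r ← ...` for all
rules, and completion rules `kn_a ← kn_{r₁},...,kn_{rₖ}`. -/
def kpProg {α : Type} (P : EProgram α) : Program (PExt α) :=
  { r' | ∃ r ∈ P, ∃ a : α, r.head = {a} ∧ r' = ⟨{kpA a}, SLit.kpBody '' r.body⟩ }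
  ∪ { r' | ∃ r ∈ P, ∃ L ∈ r.body, r' = ⟨{knR r}, {L.knBody}⟩ }
  ∪ { r' | ∃ a ∈ AtE P,
        r' = ⟨{knA a}, (fun r => Lit.pos (knR r)) '' { r ∈ P | a ∈ r.head }⟩ }

/-- Rename the atoms of a rule. -/
def Rule.mapAtoms {α β : Type} (f : α → β) (r : Rule α) : Rule β :=
  ⟨f '' r.head, (Lit.map f) '' r.body⟩

/-- `G₀(P)` viewed over the extended signature. -/
def G0ext {α : Type} (P : EProgram α) : Program (PExt α) :=
  (Rule.mapAtoms Sum.inl) '' (G0 P)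

/-- The generator program `G₁(P)`: `G₀(P)` together with the propagation
program `kp(P)` and consistency constraints `⊥ ← kp_a, ¬ka`. -/
def G1 {α : Type} (P : EProgram α) : Program (PExt α) :=
  G0ext P ∪ kpProg P
  ∪ { r' | ∃ a ∈ KAtoms P, r' = ⟨∅, {Lit.pos (kpA a), Lit.neg (kaE a)}⟩ }

/-! Interpret each fresh atom `ka` through a set `K` of original atoms. If `K` is exactly what `W`
knows about the K-atoms and `K ⊆ I`, then on interpretations whose `k`-part is `K` the reduct of
`G₀(Π)` at `I ∪ K` behaves like the reduct of `Π^W` at `I`: translated rules agree literal by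
literal, the choice rules hold, and the consistency constraints hold because `K ⊆ I`. The choice
rules also stop a submodel from shrinking the `k`-part, so minimality transfers in both directions
and `I ∪ K` is a stable model of `G₀(Π)` iff `I` is a stable model of `Π^W`. For a worldview take
`I ∈ W` and `K = k(W)`; for a stable model `M` take `I = M ∩ At(Π)` and `K = k(M)`, where the
consistency constraints give `K ⊆ I`. -/

variable {α : Type}

/-- `J` satisfies `L` as it occurs in the reduct w.r.t. `I`; a negated literal false in `I`
drops its rule. -/
def Lit.satReduct (I J : Set α) (L : Lit α) : Prop :=
  (L.isNeg → L.sat I) ∧ (¬ L.isNeg → L.sat J)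

def Rule.satReduct (I J : Set α) (r : Rule α) : Prop :=
  (∀ L ∈ r.body, L.satReduct I J) → ∃ a ∈ r.head, a ∈ J

theorem isModel_reduct_iff {Q : Program α} {I J : Set α} :
    isModel J (reduct Q I) ↔ ∀ r ∈ Q, r.satReduct I J := by
  constructor
  · intro h r hr hbody
    exact h ⟨r.head, {L | L ∈ r.body ∧ ¬ L.isNeg}⟩ ⟨r, hr, fun L hL => (hbody L hL).1, rfl⟩
      fun L hL => (hbody L hL.1).2 hL.2
  · rintro h _ ⟨r, hr, hkept, rfl⟩ hbody
    exact h r hr fun L hL => ⟨hkept L hL, fun hn => hbody L ⟨hL, hn⟩⟩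

def glue (J K : Set α) : Set (α ⊕ α) := Sum.inl '' J ∪ Sum.inr '' K

@[simp]
theorem inl_mem_glue {J K : Set α} {a : α} : Sum.inl a ∈ glue J K ↔ a ∈ J := by
  simp [glue]

@[simp]
theorem inr_mem_glue {J K : Set α} {a : α} : Sum.inr a ∈ glue J K ↔ a ∈ K := by
  simp [glue]

@[simp]
theorem restr_glue (J K : Set α) : restr (glue J K) = J := by
  ext a; simp [restr]

@[simp]
theorem kOfM_glue (J K : Set α) : kOfM (glue J K) = K := by
  ext a; simp [kOfM]

theorem glue_restr_kOfM (M : Set (α ⊕ α)) : glue (restr M) (kOfM M) = M := by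
  ext (a | a) <;> simp [restr, kOfM]

theorem glue_mono_left {J J' : Set α} (K : Set α) (h : J ⊆ J') : glue J K ⊆ glue J' K :=
  Set.union_subset_union_left _ (Set.image_mono h)

theorem satK_pos_iff_mem_kOfW {P : EProgram α} {W : Set (Set α)} {a : α} (ha : a ∈ KAtoms P) :
    satK W (.pos a) ↔ a ∈ kOfW P W :=
  ⟨fun h => ⟨ha, h⟩, And.right⟩

section G0

variable {P : EProgram α} {W : Set (Set α)} {I J K : Set α}

theorem satReduct_t0_glue_iff (hKW : ∀ a ∈ KAtoms P, satK W (.pos a) ↔ a ∈ K)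
    {r : ERule α} (hr : r ∈ P) {L : SLit α} (hL : L ∈ r.body) (hn : L.isNormal) :
    (SLit.t0 L).satReduct (glue I K) (glue J K) ↔ (L.reduce W).satReduct I J := by
  rcases L with l | l | l | l
  · cases l <;> simp [SLit.t0, SLit.reduce, Lit.map, Lit.satReduct, Lit.isNeg, Lit.sat]
  all_goals
    cases l <;> try exact hn.elim
    rename_i a
    have ha : a ∈ KAtoms P := ⟨r, hr, by simp [hL]⟩
    by_cases hs : satK W (.pos a) <;>
      simp [SLit.t0, SLit.reduce, Lit.satReduct, Lit.isNeg, Lit.sat, hs, ← hKW a ha]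

theorem isModel_glue_reduct_G0_iff (hnf : isNormalForm P)
    (hKW : ∀ a ∈ KAtoms P, satK W (.pos a) ↔ a ∈ K) (hKI : K ⊆ I) :
    isModel (glue J K) (reduct (G0 P) (glue I K)) ↔ isModel J (reduct (subjReduct P W) I) := by
  have translated (r : ERule α) (hr : r ∈ P) :
      Rule.satReduct (glue I K) (glue J K) ⟨Sum.inl '' r.head, SLit.t0 '' r.body⟩ ↔
        Rule.satReduct I J ⟨r.head, SLit.reduce W '' r.body⟩ := by
    simp only [Rule.satReduct, Set.forall_mem_image, Set.exists_mem_image, inl_mem_glue]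
    exact imp_congr_left <| forall₂_congr fun L hL =>
      satReduct_t0_glue_iff hKW hr hL (hnf r hr L hL)
  have choice (a : α) :
      Rule.satReduct (glue I K) (glue J K) ⟨{Sum.inr a}, {.nneg (Sum.inr a)}⟩ := by
    simp [Rule.satReduct, Lit.satReduct, Lit.isNeg, Lit.sat]
  have consistent (a : α) :
      Rule.satReduct (glue I K) (glue J K) ⟨∅, {.pos (Sum.inr a), .neg (Sum.inl a)}⟩ := by
    intro hbody
    have haK : Sum.inr a ∈ glue J K := (hbody _ (.inl rfl)).2 id
    have haI : Sum.inl a ∉ glue I K := (hbody _ (.inr rfl)).1 trivial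
    exact absurd (hKI (inr_mem_glue.mp haK)) (inl_mem_glue.not.mp haI)
  simp only [isModel_reduct_iff, G0, T0, subjReduct, Set.mem_union, or_imp, forall_and,
    Set.forall_mem_image]
  simpa [choice, consistent] using forall₂_congr translated

theorem kOfM_eq_of_isModel_reduct_G0 {M N : Set (α ⊕ α)} (hMK : kOfM M ⊆ KAtoms P)
    (hNM : N ⊆ M) (hN : isModel N (reduct (G0 P) M)) : kOfM N = kOfM M := by
  refine Set.Subset.antisymm (fun a ha => hNM ha) fun a ha => ?_
  have hchoice : (⟨{Sum.inr a}, {.nneg (Sum.inr a)}⟩ : Rule (α ⊕ α)) ∈ G0 P :=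
    .inl (.inr ⟨a, hMK ha, rfl⟩)
  obtain ⟨_, rfl, h⟩ := isModel_reduct_iff.mp hN _ hchoice
    (by rintro L rfl; exact ⟨fun _ => ha, fun h => (h trivial).elim⟩)
  exact h

theorem kOfM_subset_restr_of_isModel_reduct_G0 {M : Set (α ⊕ α)} (hMK : kOfM M ⊆ KAtoms P)
    (hM : isModel M (reduct (G0 P) M)) : kOfM M ⊆ restr M := by
  intro a ha
  by_contra hla
  have hconsistent : (⟨∅, {.pos (Sum.inr a), .neg (Sum.inl a)}⟩ : Rule (α ⊕ α)) ∈ G0 P :=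
    .inr ⟨a, hMK ha, rfl⟩
  obtain ⟨_, h, -⟩ := isModel_reduct_iff.mp hM _ hconsistent (by
    rintro L (rfl | rfl)
    · exact ⟨False.elim, fun _ => ha⟩
    · exact ⟨fun _ => hla, fun h => (h trivial).elim⟩)
  exact h

theorem isStable_G0_glue_iff (hnf : isNormalForm P)
    (hKW : ∀ a ∈ KAtoms P, satK W (.pos a) ↔ a ∈ K) (hK : K ⊆ KAtoms P) (hKI : K ⊆ I) :
    isStable (G0 P) (glue I K) ↔ isStable (subjReduct P W) I := by
  have hmodel {J : Set α} := isModel_glue_reduct_G0_iff (J := J) hnf hKW hKI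
  constructor
  · rintro ⟨hM, hmin⟩
    refine ⟨hmodel.mp hM, fun J hJI hJ => ?_⟩
    simpa using congrArg restr (hmin _ (glue_mono_left K hJI) (hmodel.mpr hJ))
  · rintro ⟨hI, hmin⟩
    refine ⟨hmodel.mpr hI, fun N hN hNmod => ?_⟩
    have hNI : restr N ⊆ I := fun a ha => inl_mem_glue.mp (hN ha)
    have hkN : kOfM N = K := by
      simpa using kOfM_eq_of_isModel_reduct_G0 (by simpa using hK) hN hNmod
    rw [← glue_restr_kOfM N, hkN] at hNmod ⊢
    rw [hmin _ hNI (hmodel.mp hNmod)]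

end G0

theorem G0_is_generator_general {α : Type} (P : EProgram α)
    (hnf : isNormalForm P) :
    (∀ W : Set (Set α), isWorldview P W →
        ∃ M ∈ SM (G0 P), kOfM M = kOfW P W ∧ restr M ∈ W)
    ∧ (∀ M ∈ SM (G0 P), ∀ W : Set (Set α),
        kOfW P W = kOfM M → restr M ∈ SM (subjReduct P W)) := by
  refine ⟨fun W ⟨⟨I, hIW⟩, hWeq⟩ => ?_, fun M hM W hkW => ?_⟩
  · have hI : isStable (subjReduct P W) I := by rwa [hWeq] at hIW
    have hKW (a : α) (ha : a ∈ KAtoms P) := satK_pos_iff_mem_kOfW (W := W) ha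
    have hM := (isStable_G0_glue_iff hnf hKW (fun a ha => ha.1) fun a ha => ha.2 I hIW).mpr hI
    exact ⟨glue I (kOfW P W), hM, kOfM_glue _ _, by simpa using hIW⟩
  · have hK : kOfM M ⊆ KAtoms P := hkW ▸ fun a ha => ha.1
    have hKW : ∀ a ∈ KAtoms P, satK W (.pos a) ↔ a ∈ kOfM M :=
      hkW ▸ fun a ha => satK_pos_iff_mem_kOfW ha
    have hKI := kOfM_subset_restr_of_isModel_reduct_G0 hK hM.1
    rw [← glue_restr_kOfM M] at hM
    exact (isStable_G0_glue_iff hnf hKW hK hKI).mp hM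

/-- `G₀(Π)` is a generator program for `Π`. -/
theorem G0_is_generator {α : Type} (P : EProgram α) (hfin : P.Finite)
    (hnf : isNormalForm P) :
    (∀ W : Set (Set α), isWorldview P W →
        ∃ M ∈ SM (G0 P), kOfM M = kOfW P W ∧ restr M ∈ W)
    ∧ (∀ M ∈ SM (G0 P), ∀ W : Set (Set α),
        kOfW P W = kOfM M → restr M ∈ SM (subjReduct P W)) :=
  G0_is_generator_general P hnf
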